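/- arXiv:2107.06490 — 6 statements merged into one kernel-verified Lean document; each statement's English description precedes it below -/
import Mathlib

section
/- Let x, y, q be points in Euclidean space ℝ^d with |xy| ≥ |xq|, and suppose the angle γ = ∠yxq satisfies γ ≤ θ for some θ ∈ (0,1). Then |xy| - |yq| ≥ (cos θ - sin θ)·|xq|, and in particular |xy| ≥ |yq| + (1 - 2θ)·|xq|. -/
theorem stmt_1 (d : ℕ) (x y q : EuclideanSpace ℝ (Fin d)) (θ : ℝ)
    (hθ0 : 0 < θ) (hθ1 : θ < 1)
    (hxy : dist x q ≤ dist x y)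
    (hangle : EuclideanGeometry.angle y x q ≤ θ) :
    (Real.cos θ - Real.sin θ) * dist x q ≤ dist x y - dist y q ∧
      dist y q + (1 - 2 * θ) * dist x q ≤ dist x y := by
  have hlaw := EuclideanGeometry.law_cos y x q
  set a := dist x y with ha
  set b := dist x q with hb
  set c := dist y q with hc
  have hyx : dist y x = a := dist_comm y x
  have hqx : dist q x = b := dist_comm q x
  rw [hyx, hqx] at hlaw
  have hb0 : (0:ℝ) ≤ b := dist_nonneg
  have hc0 : (0:ℝ) ≤ c := dist_nonneg
  have hγ0 : 0 ≤ EuclideanGeometry.angle y x q := EuclideanGeometry.angle_nonneg y x q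
  have hθπ : θ ≤ Real.pi := le_trans hθ1.le (by linarith [Real.pi_gt_three])
  have hcos : Real.cos θ ≤ Real.cos (EuclideanGeometry.angle y x q) :=
    Real.cos_le_cos_of_nonneg_of_le_pi hγ0 hθπ hangle
  have hsin0 : 0 ≤ Real.sin θ := Real.sin_nonneg_of_nonneg_of_le_pi hθ0.le hθπ
  have hcos1 : Real.cos θ ≤ 1 := Real.cos_le_one θ
  have hsθ : Real.sin θ ≤ θ := Real.sin_le hθ0.le
  have hcθ : 1 - θ ^ 2 / 2 ≤ Real.cos θ := Real.one_sub_sq_div_two_le_cos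
  have hpyth : Real.sin θ ^ 2 + Real.cos θ ^ 2 = 1 := Real.sin_sq_add_cos_sq θ
  have key : c ≤ a - (Real.cos θ - Real.sin θ) * b := by
    have hrhs : 0 ≤ a - (Real.cos θ - Real.sin θ) * b := by nlinarith
    nlinarith [mul_nonneg hb0 (sub_nonneg.2 hcos), mul_nonneg hb0 hsin0,
      mul_nonneg (mul_nonneg hb0 hsin0) (sub_nonneg.2 hxy),
      mul_nonneg (mul_nonneg hb0 hb0) (mul_nonneg hsin0 (sub_nonneg.2 hcos1))]
  have h2 : 1 - 2 * θ ≤ Real.cos θ - Real.sin θ := by nlinarith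
  constructor
  · linarith
  · nlinarith [mul_le_mul_of_nonneg_right h2 hb0]
end

section
/- Let G be a greedy (1+ε)-spanner of a finite point set P in a metric space (X, δ), with ε ∈ (0,1). Let (A, B) be a (4/ε)-separated pair of subsets of P. Then there is at most one edge of G with one endpoint in A and the other in B. -/
open scoped ENNReal

variable {V : Type*}

/-- `IsLinked E l` holds if consecutive elements of the list `l` are edges of `E`. -/
def IsLinked (E : Set (V × V)) : List V → Prop
  | a :: b :: l => (a, b) ∈ E ∧ IsLinked E (b :: l)
  | _ => True

/-- The total weight of a walk given as a list of vertices. -/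
noncomputable def chainCost (w : V → V → ℝ) : List V → ℝ
  | a :: b :: l => w a b + chainCost w (b :: l)
  | _ => 0

/-- The shortest-path distance from `x` to `y` in the graph with edge set `E` and
weight function `w` (`∞` if there is no walk from `x` to `y`). -/
noncomputable def gdist (E : Set (V × V)) (w : V → V → ℝ) (x y : V) : ℝ≥0∞ :=
  ⨅ (l : List V) (_ : IsLinked E l ∧ l.head? = some x ∧ l.getLast? = some y),
    ENNReal.ofReal (chainCost w l)

/-- `IsGreedySpanner ε P E` expresses that the graph with edge set `E` is a greedy
`(1+ε)`-spanner of the finite point set `P` in a metric space: it is a symmetric graph on `P`,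
it has stretch `1 + ε`, and it satisfies the greedy property: for every edge `e = (u,v)`,
the distance between `u` and `v` in `G − e` exceeds `(1+ε)·δ(u,v)`. -/
def IsGreedySpanner {X : Type*} [MetricSpace X] (ε : ℝ) (P : Finset X)
    (E : Set (X × X)) : Prop :=
  (∀ e ∈ E, e.1 ∈ P ∧ e.2 ∈ P ∧ e.1 ≠ e.2) ∧
  (∀ e ∈ E, e.swap ∈ E) ∧
  (∀ u ∈ P, ∀ v ∈ P,
    gdist E (fun a b => dist a b) u v ≤ ENNReal.ofReal ((1 + ε) * dist u v)) ∧
  (∀ e ∈ E, ENNReal.ofReal ((1 + ε) * dist e.1 e.2) <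
    gdist (E \ {e, e.swap}) (fun a b => dist a b) e.1 e.2)

theorem chainCost_nonneg (w : V → V → ℝ) (hw : ∀ a b, 0 ≤ w a b) :
    ∀ l, 0 ≤ chainCost w l
  | [] => le_refl 0
  | [_] => le_refl 0
  | a :: b :: l => add_nonneg (hw a b) (chainCost_nonneg w hw (b :: l))

theorem isLinked_restrict {E E' : Set (V × V)} (w : V → V → ℝ) (hw : ∀ a b, 0 ≤ w a b)
    (c : ℝ) (h : ∀ a b, (a, b) ∈ E → w a b ≤ c → (a, b) ∈ E') :
    ∀ l, IsLinked E l → chainCost w l ≤ c → IsLinked E' l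
  | [] , _, _ => trivial
  | [_], _, _ => trivial
  | a :: b :: l, ⟨hab, hl⟩, hc => by
      have h1 : 0 ≤ chainCost w (b :: l) := chainCost_nonneg w hw _
      have h2 : chainCost w (a :: b :: l) = w a b + chainCost w (b :: l) := rfl
      have h3 : 0 ≤ w a b := hw a b
      exact ⟨h a b hab (by linarith), isLinked_restrict w hw c h (b :: l) hl (by linarith)⟩

theorem isLinked_append {E : Set (V × V)} (w : V → V → ℝ) :
    ∀ (l1 : List V) (l2 : List V) (m : V), IsLinked E l1 → IsLinked E l2 →
      l1.getLast? = some m → l2.head? = some m →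
      IsLinked E (l1 ++ l2.tail) ∧
        chainCost w (l1 ++ l2.tail) = chainCost w l1 + chainCost w l2 ∧
        (l1 ++ l2.tail).head? = l1.head? ∧ (l1 ++ l2.tail).getLast? = l2.getLast?
  | [], l2, m, _, _, hlast, _ => by simp at hlast
  | [a], l2, m, _, h2, hlast, hhead => by
      cases l2 with
      | nil => simp at hhead
      | cons x t =>
        have hx : a = x := by
          have e1 : x = m := by simpa using hhead
          have e2 : a = m := by simpa using hlast
          rw [e1, e2]
        subst hx
        simp only [List.tail_cons, List.singleton_append]
        have h0 : chainCost w [a] = 0 := rfl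
        refine ⟨h2, by rw [h0]; ring, rfl, ?_⟩
        trivial
  | a :: b :: l, l2, m, ⟨hab, h1⟩, h2, hlast, hhead => by
      have hlast' : (b :: l).getLast? = some m := by
        rw [List.getLast?_cons_cons] at hlast; exact hlast
      obtain ⟨hL, hC, hH, hG⟩ := isLinked_append w (b :: l) l2 m h1 h2 hlast' hhead
      have he : (a :: b :: l) ++ l2.tail = a :: b :: (l ++ l2.tail) := rfl
      have he2 : (b :: l) ++ l2.tail = b :: (l ++ l2.tail) := rfl
      rw [he2] at hL hC hG
      rw [he]
      refine ⟨⟨hab, hL⟩, ?_, rfl, ?_⟩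
      · show w a b + chainCost w (b :: (l ++ l2.tail)) = chainCost w (a :: b :: l) + chainCost w l2
        rw [hC]
        show w a b + (chainCost w (b :: l) + chainCost w l2)
            = (w a b + chainCost w (b :: l)) + chainCost w l2
        ring
      · rw [List.getLast?_cons_cons]; exact hG

theorem gdist_le {E : Set (V × V)} (w : V → V → ℝ) (l : List V) (x y : V)
    (hl : IsLinked E l) (hh : l.head? = some x) (hg : l.getLast? = some y) :
    gdist E w x y ≤ ENNReal.ofReal (chainCost w l) :=
  iInf₂_le l ⟨hl, hh, hg⟩

theorem gdist_lt {E : Set (V × V)} (w : V → V → ℝ) {x y : V} {t : ℝ≥0∞}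
    (h : gdist E w x y < t) :
    ∃ l : List V, IsLinked E l ∧ l.head? = some x ∧ l.getLast? = some y ∧
      ENNReal.ofReal (chainCost w l) < t := by
  rw [gdist, iInf_lt_iff] at h
  obtain ⟨l, hl⟩ := h
  rw [iInf_lt_iff] at hl
  obtain ⟨⟨h1, h2, h3⟩, h4⟩ := hl
  exact ⟨l, h1, h2, h3, h4⟩

/-- At most one edge of a greedy `(1+ε)`-spanner joins a `(4/ε)`-separated pair `(A, B)`. -/
theorem stmt_6 {X : Type*} [MetricSpace X] (ε : ℝ) (hε0 : 0 < ε) (hε1 : ε < 1)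
    (P : Finset X) (E : Set (X × X)) (hG : IsGreedySpanner ε P E)
    (A B : Set X) (hA : A ⊆ ↑P) (hB : B ⊆ ↑P)
    (hsep : ∀ a ∈ A, ∀ b ∈ B, 4 / ε * max (Metric.diam A) (Metric.diam B) ≤ dist a b) :
    {e | e ∈ E ∧ e.1 ∈ A ∧ e.2 ∈ B}.Subsingleton := by
  obtain ⟨hmem, hsymm, hstretch, hgreedy⟩ := hG
  set w : X → X → ℝ := fun a b => dist a b with hw
  have hwpos : ∀ a b : X, 0 ≤ w a b := fun a b => dist_nonneg
  have hbdd : Bornology.IsBounded (↑P : Set X) := P.finite_toSet.isBounded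
  have hbA : Bornology.IsBounded A := hbdd.subset hA
  have hbB : Bornology.IsBounded B := hbdd.subset hB
  have key : ∀ u v u' v' : X, (u, v) ∈ E → u ∈ A → v ∈ B →
      (u', v') ∈ E → u' ∈ A → v' ∈ B → dist u' v' ≤ dist u v → (u', v') = (u, v) := by
    intro u v u' v' hpE hu hv hqE hu' hv' hdle
    by_contra hne
    have huv : u ≠ v := (hmem _ hpE).2.2
    have hd0 : 0 < dist u v := dist_pos.mpr huv
    set d := dist u v with hdd
    have hM : max (Metric.diam A) (Metric.diam B) ≤ ε * d / 4 := by
      have h := hsep u hu v hv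
      rw [div_mul_eq_mul_div, div_le_iff₀ hε0] at h
      linarith
    have huu' : dist u u' ≤ ε * d / 4 :=
      (Metric.dist_le_diam_of_mem hbA hu hu').trans ((le_max_left _ _).trans hM)
    have hvv' : dist v' v ≤ ε * d / 4 :=
      (Metric.dist_le_diam_of_mem hbB hv' hv).trans ((le_max_right _ _).trans hM)
    set η : ℝ := ε * (1 - ε) * d / 8 with hηdef
    have hη : 0 < η := by
      have := mul_pos (mul_pos hε0 (by linarith : (0:ℝ) < 1 - ε)) hd0
      rw [hηdef]; linarith
    -- the pruned edge set
    set E' : Set (X × X) := E \ {(u, v), Prod.swap (u, v)} with hE'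
    have hmemE' : ∀ c : ℝ, c < d → ∀ a b : X, (a, b) ∈ E → w a b ≤ c → (a, b) ∈ E' := by
      intro c hc a b habE hwab
      refine ⟨habE, ?_⟩
      intro hcontra
      simp only [Set.mem_insert_iff, Set.mem_singleton_iff, Prod.swap_prod_mk,
        Prod.mk.injEq] at hcontra
      rcases hcontra with ⟨rfl, rfl⟩ | ⟨rfl, rfl⟩
      · exact absurd hwab (by simp only [hw]; linarith)
      · have : w a b = d := by simp only [hw, hdd]; exact dist_comm a b
        linarith
    -- extract a path from u to u'
    have hpos1 : (0:ℝ) < (1 + ε) * dist u u' + η :=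
      add_pos_of_nonneg_of_pos (mul_nonneg (by linarith) dist_nonneg) hη
    have h1 : gdist E w u u' < ENNReal.ofReal ((1 + ε) * dist u u' + η) :=
      lt_of_le_of_lt (hstretch u (hA hu) u' (hA hu'))
        ((ENNReal.ofReal_lt_ofReal_iff hpos1).mpr (lt_add_of_pos_right _ hη))
    obtain ⟨l1, hl1E, hl1h, hl1g, hl1c⟩ := gdist_lt w h1
    have hl1cost : chainCost w l1 < (1 + ε) * dist u u' + η := by
      by_contra hcon
      exact absurd hl1c (not_lt.mpr (ENNReal.ofReal_le_ofReal (not_lt.mp hcon)))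
    have hc1d : (1 + ε) * dist u u' + η < d := by nlinarith [dist_nonneg (x := u) (y := u')]
    have hl1E' : IsLinked E' l1 :=
      isLinked_restrict w hwpos (chainCost w l1)
        (hmemE' _ (lt_trans hl1cost hc1d)) l1 hl1E le_rfl
    -- extract a path from v' to v
    have hpos3 : (0:ℝ) < (1 + ε) * dist v' v + η :=
      add_pos_of_nonneg_of_pos (mul_nonneg (by linarith) dist_nonneg) hη
    have h3 : gdist E w v' v < ENNReal.ofReal ((1 + ε) * dist v' v + η) :=
      lt_of_le_of_lt (hstretch v' (hB hv') v (hB hv))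
        ((ENNReal.ofReal_lt_ofReal_iff hpos3).mpr (lt_add_of_pos_right _ hη))
    obtain ⟨l3, hl3E, hl3h, hl3g, hl3c⟩ := gdist_lt w h3
    have hl3cost : chainCost w l3 < (1 + ε) * dist v' v + η := by
      by_contra hcon
      exact absurd hl3c (not_lt.mpr (ENNReal.ofReal_le_ofReal (not_lt.mp hcon)))
    have hc3d : (1 + ε) * dist v' v + η < d := by nlinarith [dist_nonneg (x := v') (y := v)]
    have hl3E' : IsLinked E' l3 :=
      isLinked_restrict w hwpos (chainCost w l3)
        (hmemE' _ (lt_trans hl3cost hc3d)) l3 hl3E le_rfl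
    -- the middle edge is in E'
    have hq' : (u', v') ∈ E' := by
      refine ⟨hqE, ?_⟩
      intro hcontra
      simp only [Set.mem_insert_iff, Set.mem_singleton_iff, Prod.swap_prod_mk,
        Prod.mk.injEq] at hcontra
      rcases hcontra with ⟨h1, h2⟩ | ⟨h3, h4⟩
      · exact hne (by rw [h1, h2])
      · have hx : dist u u' = d := by rw [h3]
        nlinarith
    have hl2E' : IsLinked E' [u', v'] := ⟨hq', trivial⟩
    -- compose the paths
    obtain ⟨hL12, hC12, hH12, hG12⟩ :=
      isLinked_append w l1 [u', v'] u' hl1E' hl2E' hl1g rfl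
    simp only [List.tail_cons] at hL12 hC12 hH12 hG12
    obtain ⟨hL123, hC123, hH123, hG123⟩ :=
      isLinked_append w (l1 ++ [v']) l3 v' hL12 hl3E'
        (by rw [hG12]; simp) hl3h
    have hhead : ((l1 ++ [v']) ++ l3.tail).head? = some u := by rw [hH123, hH12, hl1h]
    have hlast : ((l1 ++ [v']) ++ l3.tail).getLast? = some v := by rw [hG123, hl3g]
    have hcost2 : chainCost w [u', v'] = dist u' v' := by
      show w u' v' + chainCost w [v'] = dist u' v'
      show dist u' v' + 0 = dist u' v'
      ring
    have hcosttot : chainCost w ((l1 ++ [v']) ++ l3.tail) ≤ (1 + ε) * d := by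
      rw [hC123, hC12, hcost2]
      nlinarith [dist_nonneg (x := u') (y := v')]
    have hub : gdist E' w u v ≤ ENNReal.ofReal ((1 + ε) * d) :=
      (gdist_le w _ u v hL123 hhead hlast).trans (ENNReal.ofReal_le_ofReal hcosttot)
    have hlb := hgreedy (u, v) hpE
    rw [← hE'] at hlb
    exact absurd (lt_of_lt_of_le hlb hub) (lt_irrefl _)
  intro p hp q hq
  obtain ⟨hpE, hp1, hp2⟩ := hp
  obtain ⟨hqE, hq1, hq2⟩ := hq
  rcases le_total (dist q.1 q.2) (dist p.1 p.2) with h | h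
  · have h2 := (key p.1 p.2 q.1 q.2 hpE hp1 hp2 hqE hq1 hq2 h).symm
    rwa [Prod.mk.eta, Prod.mk.eta] at h2
  · have h2 := key q.1 q.2 p.1 p.2 hqE hq1 hq2 hpE hp1 hp2 h
    rwa [Prod.mk.eta, Prod.mk.eta] at h2
end

section
/- In the CGMZ net-tree spanner construction for a metric with doubling dimension d, let G₁ be the cross-edge graph with parameter γ = 4 + 32/ε. For any ball B(p, r), there is at most one point of B(p, r) incident to an edge of G₁ of length at least 4γr. -/
/-- In the CGMZ net-tree construction (nested nets `N i` with radii `r_i = 2^i/4`, where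
each `N i` is `r_i`-separated) with cross-edge graph `G₁` (every edge joins two distinct
points of some net `N i` at distance at most `γ · r_i`, where `γ = 4 + 32/ε`), any ball
`B(p, r)` contains at most one point incident to an edge of `G₁` of length at least `4γr`. -/
theorem stmt_14 {X : Type*} [MetricSpace X] (ε γ : ℝ) (hε : 0 < ε)
    (hγ : γ = 4 + 32 / ε)
    (N : ℕ → Set X)
    (hnest : ∀ i, N (i + 1) ⊆ N i)
    (hsep : ∀ i, ∀ u ∈ N i, ∀ v ∈ N i, u ≠ v → ((2 : ℝ) ^ i / 4) ≤ dist u v)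
    (E1 : Set (X × X))
    (hE1 : ∀ e ∈ E1, e.1 ≠ e.2 ∧
      ∃ i : ℕ, e.1 ∈ N i ∧ e.2 ∈ N i ∧ dist e.1 e.2 ≤ γ * ((2 : ℝ) ^ i / 4))
    (p : X) (r : ℝ) (hr : 0 ≤ r) :
    {u | u ∈ Metric.closedBall p r ∧
      ∃ e ∈ E1, (e.1 = u ∨ e.2 = u) ∧ 4 * γ * r ≤ dist e.1 e.2}.Subsingleton := by
  have hγpos : 0 < γ := by
    rw [hγ]; positivity
  have hsub : ∀ k l : ℕ, k ≤ l → N l ⊆ N k := by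
    intro k l hkl
    induction hkl with
    | refl => exact subset_rfl
    | step h ih => exact fun x hx => ih (hnest _ hx)
  -- key: each member of the set lies in some N i with 4r ≤ 2^i/4
  have key : ∀ u ∈ {u | u ∈ Metric.closedBall p r ∧
      ∃ e ∈ E1, (e.1 = u ∨ e.2 = u) ∧ 4 * γ * r ≤ dist e.1 e.2},
      ∃ i : ℕ, u ∈ N i ∧ 4 * r ≤ (2 : ℝ) ^ i / 4 := by
    rintro u ⟨-, e, heE, heu, hlong⟩
    obtain ⟨-, i, h1, h2, hle⟩ := hE1 e heE
    refine ⟨i, ?_, ?_⟩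
    · rcases heu with h | h
      · exact h ▸ h1
      · exact h ▸ h2
    · have h' : 4 * γ * r ≤ γ * ((2 : ℝ) ^ i / 4) := hlong.trans hle
      nlinarith [h']
  rintro u hu v hv
  obtain ⟨i, hui, hri⟩ := key u hu
  obtain ⟨j, hvj, hrj⟩ := key v hv
  by_contra hne
  have hup : dist u p ≤ r := Metric.mem_closedBall.mp hu.1
  have hvp : dist v p ≤ r := Metric.mem_closedBall.mp hv.1
  have hduv : dist u v ≤ 2 * r := by
    have := dist_triangle u p v
    rw [dist_comm p v] at this
    linarith
  have hdpos : 0 < dist u v := dist_pos.mpr hne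
  rcases le_total i j with hij | hij
  · have hvi : v ∈ N i := hsub i j hij hvj
    have := hsep i u hui v hvi hne
    linarith
  · have hui' : u ∈ N j := hsub j i hij hui
    have := hsep j u hui' v hvj hne
    linarith
end

section
/- In the CGMZ construction with parameters l = ⌈1/ε⌉ + 1 and γ = 4 + 32/ε, suppose a directed edge (v → w) of G₁ is rerouted to (v → u), where (v, w) is a cross edge at level i and (u, w) is a cross edge at level j with i ≥ j + l. Then δ(u, w) ≤ ε·δ(v, w) and δ(v, w) ≥ δ(v, u)/(1 + ε). -/
/-- The CGMZ rerouting lemma: with `γ = 4 + 32/ε`, `l = ⌈1/ε⌉ + 1` and net radii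
`r_i = 2^i/4`, if the directed edge `(v → w)` of `G₁` is a cross edge at level `i`
(so `δ(v, w) ≥ γ·r_{i−1}`, since it is not a cross edge at level `i−1`) and it is rerouted
to `(v → u)`, where `(u, w)` is a cross edge at level `j` (so `δ(u, w) ≤ γ·r_j`) with
`i ≥ j + l`, then `δ(u, w) ≤ ε·δ(v, w)` and `δ(v, w) ≥ δ(v, u)/(1 + ε)`. -/
theorem stmt_15 {X : Type*} [MetricSpace X] (ε γ : ℝ) (hε0 : 0 < ε) (hε1 : ε ≤ 1)
    (hγ : γ = 4 + 32 / ε) (l : ℕ) (hl : l = ⌈1 / ε⌉₊ + 1)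
    (u v w : X) (i j : ℕ) (hij : j + l ≤ i)
    (hvw : γ * ((2 : ℝ) ^ (i - 1) / 4) ≤ dist v w)
    (huw : dist u w ≤ γ * ((2 : ℝ) ^ j / 4)) :
    dist u w ≤ ε * dist v w ∧ dist v u / (1 + ε) ≤ dist v w := by
  set m : ℕ := ⌈1 / ε⌉₊ with hm
  have hγ0 : 0 < γ := by
    rw [hγ]; positivity
  have hi1 : j + m ≤ i - 1 := by omega
  -- 1/ε ≤ 2^m
  have h1 : (1 : ℝ) / ε ≤ (m : ℝ) := Nat.le_ceil _
  have h2 : (m : ℝ) ≤ 2 ^ m := by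
    exact_mod_cast (Nat.lt_two_pow_self (n := m)).le
  have h3 : (1 : ℝ) ≤ ε * 2 ^ m := by
    rw [← div_le_iff₀' hε0] at *
    linarith
  -- 2^j ≤ ε * 2^(i-1)
  have hpow : (2 : ℝ) ^ j ≤ ε * 2 ^ (i - 1) := by
    have : (2 : ℝ) ^ (j + m) ≤ 2 ^ (i - 1) :=
      pow_le_pow_right₀ one_le_two hi1
    rw [pow_add] at this
    nlinarith [pow_pos (two_pos (α := ℝ)) j, pow_pos (two_pos (α := ℝ)) (i - 1)]
  have huw' : dist u w ≤ ε * dist v w := by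
    calc dist u w ≤ γ * ((2 : ℝ) ^ j / 4) := huw
      _ ≤ γ * (ε * 2 ^ (i - 1) / 4) := by
          apply mul_le_mul_of_nonneg_left _ hγ0.le
          linarith
      _ = ε * (γ * ((2 : ℝ) ^ (i - 1) / 4)) := by ring
      _ ≤ ε * dist v w := by nlinarith
  refine ⟨huw', ?_⟩
  rw [div_le_iff₀ (by linarith)]
  have := dist_triangle v w u
  rw [dist_comm w u] at this
  nlinarith
end

section
/- Let G be a graph in an (η, d)-packable metric, let v be a vertex, let r > 0, and let σ be uniform on [0,1] with r* = (1+σ)·r. For any edge e of G of length w(e) ≤ r·n^{−1/d}, the probability that e is cut by the ball B(v, r*) is at most n^{−1/d}. Consequently, if G has at most τn/2 edges of length at most r·n^{−1/d}, the expected number of such edges cut by B(v, r*) is at most τ·n^{1−1/d}/2. -/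
open scoped Classical ENNReal

open MeasureTheory

def IsPackable (X : Type*) [MetricSpace X] (η : ℝ) (d : ℕ) : Prop :=
  ∀ (r : ℝ), 0 < r → r ≤ 1 → ∀ (c : X) (P : Finset X),
    (↑P : Set X) ⊆ Metric.closedBall c 1 →
    (∀ p ∈ P, ∀ q ∈ P, p ≠ q → r ≤ dist p q) →
    (P.card : ℝ) ≤ η * (1 / r) ^ d

lemma xor_set_eq {X : Type*} [MetricSpace X] (a b v : X) (r : ℝ) (hr : 0 < r) :
    {σ : ℝ | Xor' (dist a v ≤ (1 + σ) * r) (dist b v ≤ (1 + σ) * r)}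
      = Set.Ico (dist a v / r - 1) (dist b v / r - 1)
        ∪ Set.Ico (dist b v / r - 1) (dist a v / r - 1) := by
  have hiff : ∀ (σ : ℝ) (x : X), (dist x v ≤ (1 + σ) * r) ↔ dist x v / r - 1 ≤ σ := by
    intro σ x
    rw [sub_le_iff_le_add, div_le_iff₀ hr, add_comm σ 1]
  ext σ
  simp only [Set.mem_setOf_eq, Set.mem_union, Set.mem_Ico, Xor', Xor, hiff, not_le]

lemma cut_vol {X : Type*} [MetricSpace X] (a b v : X) (r c : ℝ) (hr : 0 < r) (hc : 0 ≤ c)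
    (hab : dist a b ≤ r * c) :
    volume {σ ∈ Set.Icc (0 : ℝ) 1 |
        Xor' (dist a v ≤ (1 + σ) * r) (dist b v ≤ (1 + σ) * r)}
      ≤ ENNReal.ofReal c := by
  set t1 := dist a v / r - 1 with ht1
  set t2 := dist b v / r - 1 with ht2
  have hsub : {σ ∈ Set.Icc (0 : ℝ) 1 |
      Xor' (dist a v ≤ (1 + σ) * r) (dist b v ≤ (1 + σ) * r)}
      ⊆ Set.Ico (min t1 t2) (max t1 t2) := by
    intro σ hσ
    have h2 : σ ∈ {σ : ℝ | Xor' (dist a v ≤ (1 + σ) * r) (dist b v ≤ (1 + σ) * r)} := hσ.2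
    rw [xor_set_eq a b v r hr] at h2
    rcases h2 with ⟨h1, h2⟩ | ⟨h1, h2⟩
    · exact ⟨le_trans (min_le_left _ _) h1, lt_of_lt_of_le h2 (le_max_right _ _)⟩
    · exact ⟨le_trans (min_le_right _ _) h1, lt_of_lt_of_le h2 (le_max_left _ _)⟩
  calc volume {σ ∈ Set.Icc (0 : ℝ) 1 |
        Xor' (dist a v ≤ (1 + σ) * r) (dist b v ≤ (1 + σ) * r)}
      ≤ volume (Set.Ico (min t1 t2) (max t1 t2)) := measure_mono hsub
    _ = ENNReal.ofReal (max t1 t2 - min t1 t2) := Real.volume_Ico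
    _ ≤ ENNReal.ofReal c := by
        apply ENNReal.ofReal_le_ofReal
        rw [max_sub_min_eq_abs]
        have habs : |dist a v - dist b v| ≤ dist a b := abs_dist_sub_le a b v
        have ht : t2 - t1 = (dist b v - dist a v) / r := by rw [ht1, ht2]; ring
        have habs' : |dist b v - dist a v| ≤ dist a b := by rw [abs_sub_comm]; exact habs
        rw [ht, abs_div, abs_of_pos hr, div_le_iff₀ hr]
        nlinarith

/-- For a graph in an `(η, d)`-packable metric, a vertex `v`, a radius `r > 0`, and `σ`
uniform on `[0,1]` with `r* = (1+σ)·r`: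
(a) every edge of length at most `r·n^(−1/d)` is cut by `B(v, r*)` with probability at most
`n^(−1/d)`; and
(b) if there are at most `τ·n/2` edges of length at most `r·n^(−1/d)`, then the expected
number of such edges cut by `B(v, r*)` is at most `τ·n^(1−1/d)/2`.
An edge `(a, b)` is cut by `B(v, ρ)` iff exactly one of `a, b` is within distance `ρ` of `v`. -/
theorem stmt_17 {X : Type*} [MetricSpace X] (η : ℝ) (d : ℕ) (hd : 1 ≤ d)
    (hpack : IsPackable X η d)
    (V : Finset X) (E : Finset (X × X))
    (hEV : ∀ e ∈ E, e.1 ∈ V ∧ e.2 ∈ V ∧ e.1 ≠ e.2)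
    (n : ℕ) (hn : n = V.card) (hn1 : 1 ≤ n)
    (v : X) (r : ℝ) (hr : 0 < r) (τ : ℝ) :
    (∀ e ∈ E, dist e.1 e.2 ≤ r * (n : ℝ) ^ (-(1 / (d : ℝ))) →
      volume {σ ∈ Set.Icc (0 : ℝ) 1 |
          Xor' (dist e.1 v ≤ (1 + σ) * r) (dist e.2 v ≤ (1 + σ) * r)}
        ≤ ENNReal.ofReal ((n : ℝ) ^ (-(1 / (d : ℝ))))) ∧
    (((E.filter (fun e => dist e.1 e.2 ≤ r * (n : ℝ) ^ (-(1 / (d : ℝ))))).card : ℝ)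
        ≤ τ * n / 2 →
      (∫ σ in Set.Icc (0 : ℝ) 1,
          ((E.filter (fun e => dist e.1 e.2 ≤ r * (n : ℝ) ^ (-(1 / (d : ℝ))) ∧
            Xor' (dist e.1 v ≤ (1 + σ) * r) (dist e.2 v ≤ (1 + σ) * r))).card : ℝ))
        ≤ τ * (n : ℝ) ^ (1 - 1 / (d : ℝ)) / 2) := by
  have hc : (0 : ℝ) ≤ (n : ℝ) ^ (-(1 / (d : ℝ))) :=
    Real.rpow_nonneg (Nat.cast_nonneg n) _
  constructor
  · intro e he hlen
    exact cut_vol e.1 e.2 v r _ hr hc hlen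
  · intro hF
    set c := (n : ℝ) ^ (-(1 / (d : ℝ))) with hcdef
    set F := E.filter (fun e => dist e.1 e.2 ≤ r * c) with hFdef
    have hmeas : ∀ e : X × X, MeasurableSet
        {σ : ℝ | Xor' (dist e.1 v ≤ (1 + σ) * r) (dist e.2 v ≤ (1 + σ) * r)} := by
      intro e
      rw [xor_set_eq e.1 e.2 v r hr]
      exact measurableSet_Ico.union measurableSet_Ico
    have hind : ∀ e : X × X, (fun σ : ℝ =>
        if Xor' (dist e.1 v ≤ (1 + σ) * r) (dist e.2 v ≤ (1 + σ) * r) then (1 : ℝ) else 0)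
        = Set.indicator {σ : ℝ | Xor' (dist e.1 v ≤ (1 + σ) * r)
            (dist e.2 v ≤ (1 + σ) * r)} (fun _ => 1) := by
      intro e
      funext σ
      simp [Set.indicator_apply]
    have hint : ∀ e : X × X, Integrable
        (fun σ : ℝ => if Xor' (dist e.1 v ≤ (1 + σ) * r) (dist e.2 v ≤ (1 + σ) * r)
          then (1 : ℝ) else 0)
        (volume.restrict (Set.Icc (0 : ℝ) 1)) := by
      intro e
      rw [hind e]
      exact (integrableOn_const measure_Icc_lt_top.ne).indicator (hmeas e)
    have hcard : ∀ σ : ℝ,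
        ((E.filter (fun e => dist e.1 e.2 ≤ r * c ∧
          Xor' (dist e.1 v ≤ (1 + σ) * r) (dist e.2 v ≤ (1 + σ) * r))).card : ℝ)
        = ∑ e ∈ F, (if Xor' (dist e.1 v ≤ (1 + σ) * r) (dist e.2 v ≤ (1 + σ) * r)
            then (1 : ℝ) else 0) := by
      intro σ
      rw [hFdef, ← Finset.filter_filter, Finset.card_filter]
      push_cast
      rfl
    have hone : ∀ e ∈ F, (∫ σ in Set.Icc (0 : ℝ) 1,
        (if Xor' (dist e.1 v ≤ (1 + σ) * r) (dist e.2 v ≤ (1 + σ) * r)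
          then (1 : ℝ) else 0)) ≤ c := by
      intro e heF
      have hlen : dist e.1 e.2 ≤ r * c := (Finset.mem_filter.mp heF).2
      rw [hind e, integral_indicator (hmeas e), setIntegral_const,
        measureReal_def, Measure.restrict_apply (hmeas e)]
      have hseteq : {σ : ℝ | Xor' (dist e.1 v ≤ (1 + σ) * r) (dist e.2 v ≤ (1 + σ) * r)}
          ∩ Set.Icc (0 : ℝ) 1
          = {σ ∈ Set.Icc (0 : ℝ) 1 |
              Xor' (dist e.1 v ≤ (1 + σ) * r) (dist e.2 v ≤ (1 + σ) * r)} := by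
        ext σ; simp [Set.mem_inter_iff, and_comm]
      rw [hseteq, smul_eq_mul, mul_one]
      exact ENNReal.toReal_le_of_le_ofReal hc (cut_vol e.1 e.2 v r c hr hc hlen)
    have hnpos : (0 : ℝ) < n := by exact_mod_cast hn1
    have hnc : (n : ℝ) ^ (1 - 1 / (d : ℝ)) = n * c := by
      rw [hcdef, sub_eq_add_neg, Real.rpow_add hnpos, Real.rpow_one]
    calc (∫ σ in Set.Icc (0 : ℝ) 1,
          ((E.filter (fun e => dist e.1 e.2 ≤ r * c ∧
            Xor' (dist e.1 v ≤ (1 + σ) * r) (dist e.2 v ≤ (1 + σ) * r))).card : ℝ))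
        = ∑ e ∈ F, ∫ σ in Set.Icc (0 : ℝ) 1,
            (if Xor' (dist e.1 v ≤ (1 + σ) * r) (dist e.2 v ≤ (1 + σ) * r)
              then (1 : ℝ) else 0) := by
          simp_rw [hcard]
          exact integral_finset_sum F (fun e _ => hint e)
      _ ≤ ∑ e ∈ F, c := Finset.sum_le_sum hone
      _ = (F.card : ℝ) * c := by rw [Finset.sum_const, nsmul_eq_mul]
      _ ≤ (τ * n / 2) * c := mul_le_mul_of_nonneg_right hF hc
      _ = τ * (n : ℝ) ^ (1 - 1 / (d : ℝ)) / 2 := by rw [hnc]; ring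
end

section
/- Let G be a greedy (1+ε)-spanner of a unit ball graph G_B in ℝ^d with ε ∈ (0, 1/2], where G_B is the intersection graph of balls of radius μ (two centers are adjacent iff their distance is at most 2μ). Let X, Y be vertex subsets with diam(X) ≤ εR/12 and |X, Y| ≥ R. If (s, q) and (t, y) are two edges of G with s, t ∈ X, q, y ∈ Y lying in a common cone of angle ε/8 with apex x ∈ X and |xy| ≥ |xq|, then |yq| ≤ 2μ, i.e., (q, y) is an edge of the unit ball graph G_B. -/
open scoped ENNReal

open scoped RealInnerProductSpace

lemma cone_inner_bound {E : Type*} [NormedAddCommGroup E] [InnerProductSpace ℝ E]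
    {u v a : E} (hu : u ≠ 0) (hv : v ≠ 0) {δ : ℝ} (hδ0 : 0 ≤ δ) (hδ : δ ≤ 1 / 16)
    (h1 : InnerProductGeometry.angle u a ≤ δ) (h2 : InnerProductGeometry.angle v a ≤ δ) :
    (127 / 128 : ℝ) * (‖u‖ * ‖v‖) ≤ ⟪u, v⟫ := by
  have ha : a ≠ 0 := by
    rintro rfl
    rw [InnerProductGeometry.angle_zero_right] at h1
    have := Real.pi_gt_three
    linarith
  have hδπ : δ ≤ Real.pi := by linarith [Real.pi_gt_three]
  set uh := ‖u‖⁻¹ • u with huh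
  set vh := ‖v‖⁻¹ • v with hvh
  set ah := ‖a‖⁻¹ • a with hah
  have hnu : (0:ℝ) < ‖u‖ := norm_pos_iff.mpr hu
  have hnv : (0:ℝ) < ‖v‖ := norm_pos_iff.mpr hv
  have hna : (0:ℝ) < ‖a‖ := norm_pos_iff.mpr ha
  have huh1 : ‖uh‖ = 1 := norm_smul_inv_norm hu
  have hvh1 : ‖vh‖ = 1 := norm_smul_inv_norm hv
  have hah1 : ‖ah‖ = 1 := norm_smul_inv_norm ha
  have hcosδ : (1 : ℝ) - 1/512 ≤ Real.cos δ := by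
    have := Real.one_sub_sq_div_two_le_cos (x := δ)
    nlinarith
  have key : ∀ w : E, w ≠ 0 → InnerProductGeometry.angle w a ≤ δ →
      (1:ℝ) - 1/512 ≤ ⟪‖w‖⁻¹ • w, ah⟫ := by
    intro w hw hang
    have hnw : (0:ℝ) < ‖w‖ := norm_pos_iff.mpr hw
    have hcos : Real.cos δ ≤ Real.cos (InnerProductGeometry.angle w a) :=
      Real.cos_le_cos_of_nonneg_of_le_pi (InnerProductGeometry.angle_nonneg w a) hδπ hang
    have heq : ⟪‖w‖⁻¹ • w, ah⟫ = Real.cos (InnerProductGeometry.angle w a) := by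
      rw [InnerProductGeometry.cos_angle, hah, real_inner_smul_left, real_inner_smul_right]
      field_simp
    rw [heq]
    linarith
  have hua : (1:ℝ) - 1/512 ≤ ⟪uh, ah⟫ := key u hu h1
  have hva : (1:ℝ) - 1/512 ≤ ⟪vh, ah⟫ := key v hv h2
  have hd1 : ‖uh - ah‖ ≤ 1/16 := by
    have h := norm_sub_sq_real uh ah
    rw [huh1, hah1] at h
    nlinarith [norm_nonneg (uh - ah)]
  have hd2 : ‖vh - ah‖ ≤ 1/16 := by
    have h := norm_sub_sq_real vh ah
    rw [hvh1, hah1] at h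
    nlinarith [norm_nonneg (vh - ah)]
  have hd : ‖uh - vh‖ ≤ 1/8 := by
    calc ‖uh - vh‖ ≤ ‖uh - ah‖ + ‖ah - vh‖ := norm_sub_le_norm_sub_add_norm_sub _ _ _
    _ ≤ 1/16 + 1/16 := by rw [norm_sub_rev ah vh]; linarith
    _ = 1/8 := by norm_num
  have huv : (127/128 : ℝ) ≤ ⟪uh, vh⟫ := by
    have h := norm_sub_sq_real uh vh
    rw [huh1, hvh1] at h
    nlinarith [norm_nonneg (uh - vh)]
  have heq : ⟪uh, vh⟫ = ‖u‖⁻¹ * (‖v‖⁻¹ * ⟪u, v⟫) := by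
    rw [huh, hvh, real_inner_smul_left, real_inner_smul_right]
  have : (127/128 : ℝ) ≤ ‖u‖⁻¹ * (‖v‖⁻¹ * ⟪u, v⟫) := heq ▸ huv
  have h2 : (127/128 : ℝ) * (‖u‖ * ‖v‖) ≤ (‖u‖⁻¹ * (‖v‖⁻¹ * ⟪u, v⟫)) * (‖u‖ * ‖v‖) :=
    mul_le_mul_of_nonneg_right this (by positivity)
  calc (127/128 : ℝ) * (‖u‖ * ‖v‖) ≤ (‖u‖⁻¹ * (‖v‖⁻¹ * ⟪u, v⟫)) * (‖u‖ * ‖v‖) := h2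
  _ = ⟪u, v⟫ := by field_simp


variable {V : Type*}

/-- If `G` is a greedy `(1+ε)`-spanner of a unit ball graph `G_B` in `ℝ^d` (whose vertices
are the centers `P`, with an edge between two distinct centers iff their distance is at most
`2μ`), `X, Y ⊆ P` satisfy `diam X ≤ εR/12` and `δ(X, Y) ≥ R`, and `(s, q)`, `(t, y)` are two
edges of `G` with `s, t ∈ X` and `q, y ∈ Y` lying in a common cone of angle `ε/8` with apex
`x ∈ X`, and `|xy| ≥ |xq|`, then `|yq| ≤ 2μ`, i.e. `(q, y)` is an edge of `G_B`. -/
theorem stmt_18 (d : ℕ) (μ ε R : ℝ) (hμ : 0 < μ) (hε0 : 0 < ε) (hε1 : ε ≤ 1 / 2)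
    (hR : 0 < R)
    (P : Finset (EuclideanSpace ℝ (Fin d)))
    (EB E : Set (EuclideanSpace ℝ (Fin d) × EuclideanSpace ℝ (Fin d)))
    (hEB : EB = {e | e.1 ∈ P ∧ e.2 ∈ P ∧ e.1 ≠ e.2 ∧ dist e.1 e.2 ≤ 2 * μ})
    (hEsub : E ⊆ EB)
    (hsym : ∀ e ∈ E, e.swap ∈ E)
    (hstretch : ∀ u ∈ P, ∀ v ∈ P,
      gdist E (fun a b => dist a b) u v
        ≤ ENNReal.ofReal (1 + ε) * gdist EB (fun a b => dist a b) u v)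
    (hgreedy : ∀ e ∈ E, ENNReal.ofReal ((1 + ε) * dist e.1 e.2) <
      gdist (E \ {e, e.swap}) (fun a b => dist a b) e.1 e.2)
    (Xs Ys : Set (EuclideanSpace ℝ (Fin d))) (hXP : Xs ⊆ ↑P) (hYP : Ys ⊆ ↑P)
    (hdiam : Metric.diam Xs ≤ ε * R / 12)
    (hfar : ∀ u ∈ Xs, ∀ v ∈ Ys, R ≤ dist u v)
    (x : EuclideanSpace ℝ (Fin d)) (hx : x ∈ Xs)
    (a : EuclideanSpace ℝ (Fin d)) (ha : a ≠ 0)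
    (s t q y : EuclideanSpace ℝ (Fin d))
    (hs : s ∈ Xs) (ht : t ∈ Xs) (hq : q ∈ Ys) (hy : y ∈ Ys)
    (hsq : (s, q) ∈ E) (hty : (t, y) ∈ E)
    (hconeq : InnerProductGeometry.angle (q - x) a ≤ ε / 8)
    (hconey : InnerProductGeometry.angle (y - x) a ≤ ε / 8)
    (hxy : dist x q ≤ dist x y) :
    dist y q ≤ 2 * μ := by
  have hRq : R ≤ dist x q := hfar x hx q hq
  have hRy : R ≤ dist x y := le_trans hRq hxy
  have hqx : q ≠ x := by rintro rfl; rw [dist_self] at hRq; linarith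
  have hyx : y ≠ x := by rintro rfl; rw [dist_self] at hRy; linarith
  have hu0 : y - x ≠ 0 := sub_ne_zero.mpr hyx
  have hv0 : q - x ≠ 0 := sub_ne_zero.mpr hqx
  have hinner : (127 / 128 : ℝ) * (‖y - x‖ * ‖q - x‖) ≤ ⟪y - x, q - x⟫ :=
    cone_inner_bound hu0 hv0 (by positivity) (by linarith) hconey hconeq
  have hnu : ‖y - x‖ = dist x y := by rw [dist_comm, dist_eq_norm]
  have hnv : ‖q - x‖ = dist x q := by rw [dist_comm, dist_eq_norm]
  have hyq : dist y q = ‖(y - x) - (q - x)‖ := by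
    rw [dist_eq_norm]; congr 1; abel
  have hsq : (dist y q) ^ 2 ≤ (dist x y) ^ 2 + (dist x q) ^ 2
      - 127 / 64 * (dist x y * dist x q) := by
    rw [hyq, norm_sub_sq_real, hnu, hnv]
    rw [hnu, hnv] at hinner
    nlinarith
  have hstep : dist y q ≤ dist x y - dist x q / 2 := by
    nlinarith [dist_nonneg (x := y) (y := q), dist_nonneg (x := x) (y := q), hxy, hRq, hR]
  have hxt : dist x t ≤ ε * R / 12 := by
    have hb : Bornology.IsBounded Xs :=
      Set.Finite.isBounded (P.finite_toSet.subset hXP)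
    exact le_trans (Metric.dist_le_diam_of_mem hb hx ht) hdiam
  have hty2 : dist t y ≤ 2 * μ := by
    have h := hEsub hty
    rw [hEB] at h
    exact h.2.2.2
  have htri : dist x y ≤ dist x t + dist t y := dist_triangle x t y
  have hεR : ε * R ≤ R / 2 := by nlinarith
  linarith
end
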